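/- arXiv:1905.09722 — 5 statements merged into one kernel-verified Lean document; each statement's English description precedes it below -/
import Mathlib

section
/- Let (Ω, F, P) be a probability space and G ⊆ F a sub-σ-algebra. Let U be a G-measurable real random variable, let (V_n)_{n≥1} be real random variables such that each V_n is independent of G and has standard normal law N(0,1), and let Z be a real random variable independent of G with law N(0,1). Then U·V_n converges G-stably to U·Z as n → ∞; that is, for every E ∈ G with P(E) > 0, U·V_n converges in distribution to U·Z under the conditional probability measure P(·|E). -/
open MeasureTheory ProbabilityTheory Filter

/-- Convergence in distribution (weak convergence of laws), tested against bounded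
continuous functions. -/
def ConvInDistrib {Ω : Type*} [MeasurableSpace Ω] (μ : Measure Ω)
    (X : ℕ → Ω → ℝ) (Xlim : Ω → ℝ) : Prop :=
  ∀ f : BoundedContinuousFunction ℝ ℝ,
    Tendsto (fun n => ∫ ω, f (X n ω) ∂μ) atTop (nhds (∫ ω, f (Xlim ω) ∂μ))

/-- Under the conditional measure `μ[|E]` with `E ∈ G`, a `G`-measurable `U` and a
variable `V` independent of `G` have joint law the product of the law of `U` under `μ[|E]`
and the law of `V` under `μ`. -/
lemma map_pair_cond_eq_prod
    {Ω : Type*} (G : MeasurableSpace Ω) [mΩ : MeasurableSpace Ω] (hG : G ≤ mΩ)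
    (μ : Measure Ω) [IsProbabilityMeasure μ]
    (U : Ω → ℝ) (hU : Measurable[G] U)
    (V : Ω → ℝ) (hV : Measurable V)
    (hind : Indep (MeasurableSpace.comap V inferInstance) G μ)
    (E : Set Ω) (hE : MeasurableSet[G] E) (hEpos : 0 < μ E) :
    (μ[|E]).map (fun ω => (U ω, V ω)) = ((μ[|E]).map U).prod (μ.map V) := by
  have hUm : Measurable U := hU.mono hG le_rfl
  have hEm : MeasurableSet E := hG _ hE
  haveI : IsProbabilityMeasure (μ.map V) := Measure.isProbabilityMeasure_map hV.aemeasurable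
  haveI : IsProbabilityMeasure (μ[|E]) := cond_isProbabilityMeasure hEpos.ne'
  refine (Measure.prod_eq fun s t hs ht => ?_).symm
  rw [Measure.map_apply (hUm.prodMk hV) (hs.prod ht), Set.mk_preimage_prod,
    Measure.map_apply hUm hs, Measure.map_apply hV ht,
    cond_apply hEm, cond_apply hEm]
  have hind' := (Indep_iff _ _ _).1 hind (V ⁻¹' t) (E ∩ U ⁻¹' s)
    (MeasurableSpace.measurableSet_comap.2 ⟨t, ht, rfl⟩)
    (hE.inter (hU hs))
  have : E ∩ (U ⁻¹' s ∩ V ⁻¹' t) = V ⁻¹' t ∩ (E ∩ U ⁻¹' s) := by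
    ext ω; simp [and_comm, and_assoc, and_left_comm]
  rw [this, hind']
  ring

/-- If `U` is `G`-measurable, each `V n` is independent of `G` with law `N(0,1)`, and `Z` is
independent of `G` with law `N(0,1)`, then `U * V n` converges `G`-stably to `U * Z`. -/
theorem stable_convergence_of_indep_gaussian
    {Ω : Type*} (G : MeasurableSpace Ω) [mΩ : MeasurableSpace Ω] (hG : G ≤ mΩ)
    (μ : Measure Ω) [IsProbabilityMeasure μ]
    (U : Ω → ℝ) (hU : Measurable[G] U)
    (V : ℕ → Ω → ℝ) (hVmeas : ∀ n, Measurable (V n))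
    (hVindep : ∀ n, Indep (MeasurableSpace.comap (V n) inferInstance) G μ)
    (hVlaw : ∀ n, μ.map (V n) = gaussianReal 0 1)
    (Z : Ω → ℝ) (hZmeas : Measurable Z)
    (hZindep : Indep (MeasurableSpace.comap Z inferInstance) G μ)
    (hZlaw : μ.map Z = gaussianReal 0 1) :
    ∀ E : Set Ω, MeasurableSet[G] E → 0 < μ E →
      ConvInDistrib (μ[|E]) (fun n ω => U ω * V n ω) (fun ω => U ω * Z ω) := by
  intro E hE hEpos f
  have hUm : Measurable U := hU.mono hG le_rfl
  have key : ∀ (W : Ω → ℝ), Measurable W →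
      Indep (MeasurableSpace.comap W inferInstance) G μ → μ.map W = gaussianReal 0 1 →
      ∫ ω, f (U ω * W ω) ∂(μ[|E])
        = ∫ p : ℝ × ℝ, f (p.1 * p.2) ∂(((μ[|E]).map U).prod (gaussianReal 0 1)) := by
    intro W hW hWind hWlaw
    rw [← hWlaw, ← map_pair_cond_eq_prod G hG μ U hU W hW hWind E hE hEpos,
      integral_map (hUm.prodMk hW).aemeasurable]
    exact (f.continuous.comp (continuous_fst.mul continuous_snd)).aestronglyMeasurable
  have heq : (fun n => ∫ ω, f (U ω * V n ω) ∂(μ[|E]))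
      = fun _ => ∫ ω, f (U ω * Z ω) ∂(μ[|E]) := by
    funext n
    rw [key (V n) (hVmeas n) (hVindep n) (hVlaw n), key Z hZmeas hZindep hZlaw]
  rw [heq]
  exact tendsto_const_nhds
end

section
/- In the two-stage model with η'(·, θ₀) a bounded Borel function on [a,b], fix n₂ ≥ 1 and for 1 ≤ j ≤ n₂ let F_j = σ(ȳ₁, ε_{2,1}, …, ε_{2,j}) (with F₀ = σ(ȳ₁)) and let 𝒟_j(θ₀) = σ^{-2}(y_{2,j} − η(x₂, θ₀))·η'(x₂, θ₀) be the j-th subject-wise second-stage score increment. Then E[𝒟_j(θ₀)² | F_{j−1}] = η'(x₂, θ₀)²/σ² almost surely for every j; consequently the subject-wise and the stage-wise incremental expected information coincide: I^𝒟_n(θ₀) = I^D_n(θ₀) = (n₁/σ²)·η'(x₁, θ₀)² + (n₂/σ²)·η'(x₂, θ₀)². -/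
open MeasureTheory ProbabilityTheory Filter

open scoped NNReal

/-!
Each score increment factors as `𝒟 = (η'(x)/σ²) · ε`, where the design factor `η'(x)/σ²` is
measurable with respect to the past and the fresh noise `ε ~ N(0, σ²)` is independent of it:
both filtrations are generated by noise variables other than the current one.
Pulling out the known factor and replacing the conditional expectation of `ε²` by its mean `σ²`
gives `E[𝒟² | past] = η'(x)²/σ²`; summing over the `n₁` first-stage and `n₂` second-stage
subjects gives the information.
-/

namespace ProbabilityTheory

variable {Ω : Type*} {mΩ : MeasurableSpace Ω} {μ : Measure Ω}

lemma integral_sq_gaussianReal_zero (v : ℝ≥0) : ∫ x, x ^ 2 ∂gaussianReal 0 v = v := by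
  have h := variance_eq_integral aemeasurable_id (μ := gaussianReal 0 v)
  simp only [id, variance_id_gaussianReal, integral_id_gaussianReal, sub_zero] at h
  exact h.symm

lemma HasLaw.integrable_sq_gaussianReal {X : Ω → ℝ} {m : ℝ} {v : ℝ≥0}
    (hX : HasLaw X (gaussianReal m v) μ) : Integrable (fun ω => X ω ^ 2) μ := by
  have h : Integrable (fun x : ℝ => x ^ 2) (μ.map X) := by
    rw [hX.map_eq]
    exact (memLp_id_gaussianReal 2).integrable_sq
  exact (integrable_map_measure (by fun_prop) hX.aemeasurable).mp h

lemma HasLaw.integral_sq_gaussianReal_zero {X : Ω → ℝ} {v : ℝ≥0}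
    (hX : HasLaw X (gaussianReal 0 v) μ) : ∫ ω, X ω ^ 2 ∂μ = v := by
  rw [← ProbabilityTheory.integral_sq_gaussianReal_zero v]
  exact hX.integral_comp (f := fun x : ℝ => x ^ 2) (by fun_prop)

section comapExcept

variable {ι β : Type*} [mβ : MeasurableSpace β]

abbrev comapExcept (f : ι → Ω → β) (i : ι) : MeasurableSpace Ω :=
  ⨆ (j) (_ : j ≠ i), mβ.comap (f j)

lemma measurable_comapExcept {f : ι → Ω → β} {i j : ι} (hji : j ≠ i) :
    Measurable[comapExcept f i] (f j) :=
  Measurable.of_comap_le (le_iSup₂ (f := fun j (_ : j ≠ i) => mβ.comap (f j)) j hji)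

lemma comapExcept_le {f : ι → Ω → β} (hf : ∀ i, Measurable (f i)) (i : ι) :
    comapExcept f i ≤ mΩ :=
  iSup₂_le fun j _ => (hf j).comap_le

lemma iIndepFun.indep_comap_of_le_comapExcept {f : ι → Ω → β} (hf : ∀ i, Measurable (f i))
    (h : iIndepFun f μ) {i : ι} {m : MeasurableSpace Ω} (hm : m ≤ comapExcept f i) :
    Indep (mβ.comap (f i)) m μ := by
  have h_disj := indep_iSup_of_disjoint (fun j => (hf j).comap_le) h
    (disjoint_compl_right (a := ({i} : Set ι)))
  simp only [Set.mem_singleton_iff, iSup_iSup_eq_left] at h_disj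
  exact indep_of_indep_of_le_right h_disj hm

end comapExcept

end ProbabilityTheory

namespace MeasureTheory

variable {Ω : Type*} {mΩ : MeasurableSpace Ω} {μ : Measure Ω}

theorem condExp_mul_of_indep {m₁ m₂ : MeasurableSpace Ω} (hle₁ : m₁ ≤ mΩ) (hle₂ : m₂ ≤ mΩ)
    [SigmaFinite (μ.trim hle₂)] {f g : Ω → ℝ} (hf : StronglyMeasurable[m₂] f)
    (hg : StronglyMeasurable[m₁] g) (hindep : Indep m₁ m₂ μ) (hfg : Integrable (f * g) μ)
    (hg_int : Integrable g μ) : μ[f * g | m₂] =ᵐ[μ] fun ω => f ω * μ[g] := by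
  filter_upwards [condExp_mul_of_stronglyMeasurable_left hf hfg hg_int,
    condExp_indep_eq hle₁ hle₂ hg hindep] with ω hpull hindep_ω
  rw [hpull, Pi.mul_apply, hindep_ω]

theorem condExp_sq_score_of_indep_gaussian [IsFiniteMeasure μ] {σ : ℝ} {e Z : Ω → ℝ}
    (he : Measurable e) {m : MeasurableSpace Ω} (hm : m ≤ mΩ)
    (he_law : HasLaw e (gaussianReal 0 ⟨σ ^ 2, sq_nonneg σ⟩) μ)
    (hindep : Indep (MeasurableSpace.comap e inferInstance) m μ)
    (hZ : StronglyMeasurable[m] Z) (hZ_bdd : ∃ C, ∀ ω, |Z ω| ≤ C) :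
    μ[fun ω => ((σ ^ 2)⁻¹ * e ω * Z ω) ^ 2 | m] =ᵐ[μ] fun ω => Z ω ^ 2 / σ ^ 2 := by
  obtain ⟨C, hC⟩ := hZ_bdd
  set f : Ω → ℝ := fun ω => ((σ ^ 2)⁻¹ * Z ω) ^ 2
  have hf : StronglyMeasurable[m] f := (hZ.const_mul _).pow 2
  have he_sq : StronglyMeasurable[MeasurableSpace.comap e inferInstance] fun ω => e ω ^ 2 :=
    ((comap_measurable e).pow_const 2).stronglyMeasurable
  have hfe : Integrable (f * fun ω => e ω ^ 2) μ := by
    refine he_law.integrable_sq_gaussianReal.bdd_mul (c := ((σ ^ 2)⁻¹ * C) ^ 2)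
      (hf.mono hm).aestronglyMeasurable (ae_of_all _ fun ω => ?_)
    rw [Real.norm_eq_abs, abs_pow, abs_mul, abs_of_nonneg (inv_nonneg.2 (sq_nonneg σ))]
    gcongr
    exact hC ω
  have hsplit : (fun ω => ((σ ^ 2)⁻¹ * e ω * Z ω) ^ 2) = f * fun ω => e ω ^ 2 := by
    ext ω
    simp only [f, Pi.mul_apply]
    ring
  rw [hsplit]
  filter_upwards [condExp_mul_of_indep he.comap_le hm hf he_sq hindep hfe
    he_law.integrable_sq_gaussianReal] with ω hω
  rw [hω, he_law.integral_sq_gaussianReal_zero]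
  calc ((σ ^ 2)⁻¹ * Z ω) ^ 2 * σ ^ 2
      = (σ ^ 2)⁻¹ * (σ ^ 2)⁻¹ * ((σ ^ 2)⁻¹)⁻¹ * Z ω ^ 2 := by rw [inv_inv]; ring
    _ = Z ω ^ 2 / σ ^ 2 := by rw [mul_self_mul_inv, div_eq_inv_mul]

end MeasureTheory

theorem subjectwise_incremental_expected_information_general
    {Ω : Type*} [mΩ : MeasurableSpace Ω] (μ : Measure Ω) [IsProbabilityMeasure μ]
    (n₁ : ℕ) (a b x₁ θ₀ σ : ℝ)
    (η η' : ℝ → ℝ → ℝ)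
    (hη' : Measurable fun x => η' x θ₀)
    (hη'bdd : ∃ C : ℝ, ∀ x ∈ Set.Icc a b, |η' x θ₀| ≤ C)
    (ε : (Fin n₁ ⊕ ℕ) → Ω → ℝ) (hεmeas : ∀ k, Measurable (ε k))
    (hεindep : iIndepFun ε μ)
    (hεlaw : ∀ k, μ.map (ε k) = gaussianReal 0 ⟨σ ^ 2, sq_nonneg σ⟩)
    (ξ : ℝ → ℝ) (hξ : Measurable ξ) (hξab : ∀ y, ξ y ∈ Set.Icc a b)
    -- individual responses
    (y₁ : Fin n₁ → Ω → ℝ) (hy₁ : y₁ = fun i ω => η x₁ θ₀ + ε (Sum.inl i) ω)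
    (ybar₁ : Ω → ℝ) (hybar₁ : ybar₁ = fun ω => (n₁ : ℝ)⁻¹ * ∑ i : Fin n₁, y₁ i ω)
    (n₂ : ℕ)
    (y₂ : ℕ → Ω → ℝ) (hy₂ : y₂ = fun j ω => η (ξ (ybar₁ ω)) θ₀ + ε (Sum.inr j) ω)
    -- first-stage filtration `G i = σ(y₁ k, k < i)` and subject-wise increments
    (G : Fin n₁ → MeasurableSpace Ω)
    (hG : G = fun i => ⨆ k : Fin n₁, ⨆ _ : k < i,
      MeasurableSpace.comap (y₁ k) inferInstance)
    (𝒟₁ : Fin n₁ → Ω → ℝ)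
    (h𝒟₁ : 𝒟₁ = fun i ω => (σ ^ 2)⁻¹ * (y₁ i ω - η x₁ θ₀) * η' x₁ θ₀)
    -- second-stage filtration `F j = σ(ȳ₁, ε₂ₖ, k < j)` and subject-wise increments
    (F : ℕ → MeasurableSpace Ω)
    (hF : F = fun j => MeasurableSpace.comap ybar₁ inferInstance ⊔
      ⨆ k ∈ Finset.range j, MeasurableSpace.comap (ε (Sum.inr k)) inferInstance)
    (𝒟₂ : ℕ → Ω → ℝ)
    (h𝒟₂ : 𝒟₂ = fun j ω => (σ ^ 2)⁻¹ * (y₂ j ω - η (ξ (ybar₁ ω)) θ₀) * η' (ξ (ybar₁ ω)) θ₀) :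
    (∀ j < n₂, μ[fun ω => (𝒟₂ j ω) ^ 2 | F j] =ᵐ[μ]
        fun ω => (η' (ξ (ybar₁ ω)) θ₀) ^ 2 / σ ^ 2) ∧
      ((fun ω => ∑ i : Fin n₁, (μ[fun ω' => (𝒟₁ i ω') ^ 2 | G i]) ω +
          ∑ j ∈ Finset.range n₂, (μ[fun ω' => (𝒟₂ j ω') ^ 2 | F j]) ω) =ᵐ[μ]
        fun ω => ((n₁ : ℝ) / σ ^ 2) * (η' x₁ θ₀) ^ 2 +
          ((n₂ : ℝ) / σ ^ 2) * (η' (ξ (ybar₁ ω)) θ₀) ^ 2) := by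
  obtain ⟨C, hC⟩ := hη'bdd
  have hlaw k : HasLaw (ε k) (gaussianReal 0 ⟨σ ^ 2, sq_nonneg σ⟩) μ :=
    ⟨(hεmeas k).aemeasurable, hεlaw k⟩
  have hG_le i : G i ≤ comapExcept ε (Sum.inl i) := by
    subst hG hy₁
    refine iSup₂_le fun k hki => (measurable_const.add (measurable_comapExcept ?_)).comap_le
    simpa using hki.ne
  have hF_le j : F j ≤ comapExcept ε (Sum.inr j) := by
    subst hF hybar₁ hy₁
    refine sup_le ?_ (iSup₂_le fun k hk => (measurable_comapExcept ?_).comap_le)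
    · exact (measurable_const.mul (Finset.measurable_sum _ fun i _ =>
        measurable_const.add (measurable_comapExcept Sum.inl_ne_inr))).comap_le
    · simpa using (Finset.mem_range.mp hk).ne
  have stage₁ i : μ[fun ω => (𝒟₁ i ω) ^ 2 | G i] =ᵐ[μ] fun _ => (η' x₁ θ₀) ^ 2 / σ ^ 2 := by
    simp only [h𝒟₁, hy₁, add_sub_cancel_left]
    exact condExp_sq_score_of_indep_gaussian (hεmeas _)
      ((hG_le i).trans (comapExcept_le hεmeas _)) (hlaw _)
      (hεindep.indep_comap_of_le_comapExcept hεmeas (hG_le i)) stronglyMeasurable_const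
      ⟨_, fun _ => le_rfl⟩
  have stage₂ j : μ[fun ω => (𝒟₂ j ω) ^ 2 | F j] =ᵐ[μ]
      fun ω => (η' (ξ (ybar₁ ω)) θ₀) ^ 2 / σ ^ 2 := by
    have hybar_F : Measurable[F j] ybar₁ := hF ▸ Measurable.of_comap_le le_sup_left
    simp only [h𝒟₂, hy₂, add_sub_cancel_left]
    exact condExp_sq_score_of_indep_gaussian (hεmeas _)
      ((hF_le j).trans (comapExcept_le hεmeas _)) (hlaw _)
      (hεindep.indep_comap_of_le_comapExcept hεmeas (hF_le j))
      ((hη'.comp hξ).comp hybar_F).stronglyMeasurable ⟨C, fun ω => hC _ (hξab _)⟩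
  refine ⟨fun j _ => stage₂ j, ?_⟩
  filter_upwards [ae_all_iff.2 stage₁, ae_all_iff.2 stage₂] with ω h₁ h₂
  simp only [h₁, h₂, Finset.sum_const, Finset.card_univ, Fintype.card_fin, Finset.card_range,
    nsmul_eq_mul]
  ring

/-- In the two-stage adaptive model, each subject-wise second-stage score increment satisfies
`E[𝒟_j(θ₀)² | F_{j−1}] = η'(x₂, θ₀)²/σ²` a.s.; consequently the subject-wise and the
stage-wise incremental expected information coincide:
`I^𝒟_n(θ₀) = I^D_n(θ₀) = (n₁/σ²)·η'(x₁, θ₀)² + (n₂/σ²)·η'(x₂, θ₀)²`. -/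
theorem subjectwise_incremental_expected_information
    {Ω : Type*} [mΩ : MeasurableSpace Ω] (μ : Measure Ω) [IsProbabilityMeasure μ]
    (n₁ : ℕ) (hn₁ : 1 ≤ n₁) (a b x₁ θ₀ σ : ℝ) (hab : a ≤ b) (hσ : 0 < σ)
    (η η' : ℝ → ℝ → ℝ) (hη : Measurable fun x => η x θ₀)
    (hderiv : ∀ x θ, HasDerivAt (fun t => η x t) (η' x θ) θ)
    (hη' : Measurable fun x => η' x θ₀)
    (hη'bdd : ∃ C : ℝ, ∀ x ∈ Set.Icc a b, |η' x θ₀| ≤ C)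
    (ε : (Fin n₁ ⊕ ℕ) → Ω → ℝ) (hεmeas : ∀ k, Measurable (ε k))
    (hεindep : iIndepFun ε μ)
    (hεlaw : ∀ k, μ.map (ε k) = gaussianReal 0 ⟨σ ^ 2, sq_nonneg σ⟩)
    (ξ : ℝ → ℝ) (hξ : Measurable ξ) (hξab : ∀ y, ξ y ∈ Set.Icc a b)
    -- individual responses
    (y₁ : Fin n₁ → Ω → ℝ) (hy₁ : y₁ = fun i ω => η x₁ θ₀ + ε (Sum.inl i) ω)
    (ybar₁ : Ω → ℝ) (hybar₁ : ybar₁ = fun ω => (n₁ : ℝ)⁻¹ * ∑ i : Fin n₁, y₁ i ω)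
    (n₂ : ℕ) (hn₂ : 1 ≤ n₂)
    (y₂ : ℕ → Ω → ℝ) (hy₂ : y₂ = fun j ω => η (ξ (ybar₁ ω)) θ₀ + ε (Sum.inr j) ω)
    -- first-stage filtration `G i = σ(y₁ k, k < i)` and subject-wise increments
    (G : Fin n₁ → MeasurableSpace Ω)
    (hG : G = fun i => ⨆ k : Fin n₁, ⨆ _ : k < i,
      MeasurableSpace.comap (y₁ k) inferInstance)
    (𝒟₁ : Fin n₁ → Ω → ℝ)
    (h𝒟₁ : 𝒟₁ = fun i ω => (σ ^ 2)⁻¹ * (y₁ i ω - η x₁ θ₀) * η' x₁ θ₀)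
    -- second-stage filtration `F j = σ(ȳ₁, ε₂ₖ, k < j)` and subject-wise increments
    (F : ℕ → MeasurableSpace Ω)
    (hF : F = fun j => MeasurableSpace.comap ybar₁ inferInstance ⊔
      ⨆ k ∈ Finset.range j, MeasurableSpace.comap (ε (Sum.inr k)) inferInstance)
    (𝒟₂ : ℕ → Ω → ℝ)
    (h𝒟₂ : 𝒟₂ = fun j ω => (σ ^ 2)⁻¹ * (y₂ j ω - η (ξ (ybar₁ ω)) θ₀) * η' (ξ (ybar₁ ω)) θ₀) :
    (∀ j < n₂, μ[fun ω => (𝒟₂ j ω) ^ 2 | F j] =ᵐ[μ]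
        fun ω => (η' (ξ (ybar₁ ω)) θ₀) ^ 2 / σ ^ 2) ∧
      ((fun ω => ∑ i : Fin n₁, (μ[fun ω' => (𝒟₁ i ω') ^ 2 | G i]) ω +
          ∑ j ∈ Finset.range n₂, (μ[fun ω' => (𝒟₂ j ω') ^ 2 | F j]) ω) =ᵐ[μ]
        fun ω => ((n₁ : ℝ) / σ ^ 2) * (η' x₁ θ₀) ^ 2 +
          ((n₂ : ℝ) / σ ^ 2) * (η' (ξ (ybar₁ ω)) θ₀) ^ 2) :=
  subjectwise_incremental_expected_information_general (mΩ := mΩ) μ n₁ a b x₁ θ₀ σ η η' hη' hη'bdd ε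
    hεmeas hεindep hεlaw ξ hξ hξab y₁ hy₁ ybar₁ hybar₁ n₂ y₂ hy₂ G hG 𝒟₁ h𝒟₁ F hF 𝒟₂ h𝒟₂
end

section
/- (Lemma 4.1, part (1), at the true parameter.) In the two-stage model with η(·, θ₀), η'(·, θ₀), η''(·, θ₀) bounded Borel functions on [a,b], define the observed information j_n(θ₀) = (n₁/σ²)η'(x₁, θ₀)² − (n₁/σ²)(ȳ₁ − η(x₁, θ₀))η''(x₁, θ₀) + (n₂/σ²)η'(x₂, θ₀)² − (n₂/σ²)(ȳ₂ − η(x₂, θ₀))η''(x₂, θ₀), where n = n₁ + n₂. Then, as n₂ → ∞ with n₁ held fixed, n^{-1} j_n(θ₀) converges in probability to η'(x₂, θ₀)²/σ². -/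
open MeasureTheory ProbabilityTheory Filter Finset
open scoped NNReal Topology

/-!
Write `p`, `q`, `e` for `η'`, `η''`, `η` at the random dose `x₂`. Then
`j_n = c + n₂ (p² - (ȳ₂ - e) q) / σ²`, where `c` is the first-stage contribution and does not
depend on `n₂`. Although `x₂` is random, `ȳ₂ - e` is just the average of the i.i.d. centred
noises `ε_{2,j}`, so by the strong law it tends to `0` almost surely. Hence `j_n / n → p² / σ²`
almost surely, and therefore in probability.
-/

theorem ae_tendsto_average_of_map_eq_gaussianReal {Ω : Type*} [MeasurableSpace Ω]
    {μ : Measure Ω} {X : ℕ → Ω → ℝ} {m : ℝ} {v : ℝ≥0}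
    (hindep : Pairwise fun i j => X i ⟂ᵢ[μ] X j) (hlaw : ∀ i, μ.map (X i) = gaussianReal m v) :
    ∀ᵐ ω ∂μ, Tendsto (fun n : ℕ => (∑ i ∈ range n, X i ω) / n) atTop (𝓝 m) := by
  have hX : ∀ i, IdentDistrib (X i) id μ (gaussianReal m v) := fun i =>
    ⟨.of_map_ne_zero (hlaw i ▸ NeZero.ne _), aemeasurable_id, by rw [hlaw, Measure.map_id]⟩
  have hint : Integrable (X 0) μ :=
    (hX 0).integrable_iff.mpr ((memLp_id_gaussianReal 1).integrable le_rfl)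
  have hmean : μ[X 0] = m := by
    rw [(hX 0).integral_eq]
    exact integral_id_gaussianReal
  simpa only [hmean] using
    strong_law_ae_real X hint hindep fun i => (hX i).trans (hX 0).symm

theorem tendsto_inv_natCast_add_mul {c L : ℝ} {u : ℕ → ℝ} (k : ℕ)
    (hu : Tendsto u atTop (𝓝 L)) :
    Tendsto (fun n : ℕ => ((k + n : ℕ) : ℝ)⁻¹ * (c + n * u n)) atTop (𝓝 L) := by
  have hinv : Tendsto (fun n : ℕ => ((n : ℝ) + k)⁻¹) atTop (𝓝 0) :=
    (tendsto_atTop_add_const_right _ _ tendsto_natCast_atTop_atTop).inv_tendsto_atTop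
  have hlim := (hinv.mul_const c).add ((tendsto_natCast_div_add_atTop (k : ℝ)).mul hu)
  rw [zero_mul, zero_add, one_mul] at hlim
  refine hlim.congr fun n => ?_
  push_cast
  ring

theorem inv_mul_sum_const_add_sub {n : ℕ} (hn : n ≠ 0) (e : ℝ) (x : ℕ → ℝ) :
    (n : ℝ)⁻¹ * ∑ j ∈ range n, (e + x j) - e = (∑ j ∈ range n, x j) / n := by
  rw [sum_add_distrib, sum_const, card_range, nsmul_eq_mul]
  field_simp
  ring

theorem observed_information_convergence_in_probability_general
    {Ω : Type*} [mΩ : MeasurableSpace Ω] (μ : Measure Ω) [IsProbabilityMeasure μ]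
    (n₁ : ℕ) (x₁ θ₀ σ : ℝ)
    (η η' η'' : ℝ → ℝ → ℝ)
    (hη : Measurable fun x => η x θ₀)
    (hη' : Measurable fun x => η' x θ₀)
    (hη'' : Measurable fun x => η'' x θ₀)
    (ε : (Fin n₁ ⊕ ℕ) → Ω → ℝ) (hεmeas : ∀ k, Measurable (ε k))
    (hεindep : iIndepFun ε μ)
    (hεlaw : ∀ k, μ.map (ε k) = gaussianReal 0 ⟨σ ^ 2, sq_nonneg σ⟩)
    (ξ : ℝ → ℝ) (hξ : Measurable ξ)
    (ybar₁ : Ω → ℝ)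
    (hybar₁ : ybar₁ = fun ω => (n₁ : ℝ)⁻¹ * ∑ i : Fin n₁, (η x₁ θ₀ + ε (Sum.inl i) ω))
    (ybar₂ : ℕ → Ω → ℝ)
    (hybar₂ : ybar₂ = fun (n₂ : ℕ) (ω : Ω) =>
      (n₂ : ℝ)⁻¹ * ∑ j ∈ Finset.range n₂, (η (ξ (ybar₁ ω)) θ₀ + ε (Sum.inr j) ω))
    -- the observed information, for second-stage sample size `n₂`
    (J : ℕ → Ω → ℝ)
    (hJ : J = fun (n₂ : ℕ) (ω : Ω) =>
      ((n₁ : ℝ) / σ ^ 2) * (η' x₁ θ₀) ^ 2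
        - ((n₁ : ℝ) / σ ^ 2) * (ybar₁ ω - η x₁ θ₀) * η'' x₁ θ₀
        + ((n₂ : ℝ) / σ ^ 2) * (η' (ξ (ybar₁ ω)) θ₀) ^ 2
        - ((n₂ : ℝ) / σ ^ 2) * (ybar₂ n₂ ω - η (ξ (ybar₁ ω)) θ₀) * η'' (ξ (ybar₁ ω)) θ₀) :
    TendstoInMeasure μ (fun (n₂ : ℕ) (ω : Ω) => ((n₁ + n₂ : ℕ) : ℝ)⁻¹ * J n₂ ω) atTop
      (fun ω => (η' (ξ (ybar₁ ω)) θ₀) ^ 2 / σ ^ 2) := by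
  have hslln := ae_tendsto_average_of_map_eq_gaussianReal (X := fun j => ε (Sum.inr j))
    (fun i j hij => hεindep.indepFun (Sum.inr_injective.ne hij)) (fun j => hεlaw _)
  have hybar₁_meas : Measurable ybar₁ := by rw [hybar₁]; fun_prop
  subst hJ hybar₂
  refine tendstoInMeasure_of_tendsto_ae (fun n => by fun_prop) ?_
  filter_upwards [hslln] with ω hω
  set x₂ := ξ (ybar₁ ω)
  set c := (n₁ : ℝ) / σ ^ 2 * η' x₁ θ₀ ^ 2 - (n₁ : ℝ) / σ ^ 2 * (ybar₁ ω - η x₁ θ₀) * η'' x₁ θ₀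
  have hmean₂ : Tendsto (fun n : ℕ => (n : ℝ)⁻¹ * ∑ j ∈ range n, (η x₂ θ₀ + ε (Sum.inr j) ω)
      - η x₂ θ₀) atTop (𝓝 0) := by
    refine hω.congr' ?_
    filter_upwards [eventually_ne_atTop 0] with n hn
    exact (inv_mul_sum_const_add_sub hn _ _).symm
  have hu := ((tendsto_const_nhds (x := η' x₂ θ₀ ^ 2)).sub
    (hmean₂.mul_const (η'' x₂ θ₀))).div_const (σ ^ 2)
  rw [zero_mul, sub_zero] at hu
  refine (tendsto_inv_natCast_add_mul (c := c) n₁ hu).congr fun n => ?_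
  ring

/-- Lemma 4.1 (1), at the true parameter: as `n₂ → ∞` with `n₁` fixed, the averaged observed
information `n⁻¹ j_n(θ₀)` converges in probability to `η'(x₂, θ₀)²/σ²`. -/
theorem observed_information_convergence_in_probability
    {Ω : Type*} [mΩ : MeasurableSpace Ω] (μ : Measure Ω) [IsProbabilityMeasure μ]
    (n₁ : ℕ) (hn₁ : 1 ≤ n₁) (a b x₁ θ₀ σ : ℝ) (hab : a ≤ b) (hσ : 0 < σ)
    (η η' η'' : ℝ → ℝ → ℝ)
    (hderiv : ∀ x θ, HasDerivAt (fun t => η x t) (η' x θ) θ)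
    (hderiv2 : ∀ x θ, HasDerivAt (fun t => η' x t) (η'' x θ) θ)
    (hη : Measurable fun x => η x θ₀) (hηbdd : ∃ C : ℝ, ∀ x ∈ Set.Icc a b, |η x θ₀| ≤ C)
    (hη' : Measurable fun x => η' x θ₀) (hη'bdd : ∃ C : ℝ, ∀ x ∈ Set.Icc a b, |η' x θ₀| ≤ C)
    (hη'' : Measurable fun x => η'' x θ₀)
    (hη''bdd : ∃ C : ℝ, ∀ x ∈ Set.Icc a b, |η'' x θ₀| ≤ C)
    (ε : (Fin n₁ ⊕ ℕ) → Ω → ℝ) (hεmeas : ∀ k, Measurable (ε k))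
    (hεindep : iIndepFun ε μ)
    (hεlaw : ∀ k, μ.map (ε k) = gaussianReal 0 ⟨σ ^ 2, sq_nonneg σ⟩)
    (ξ : ℝ → ℝ) (hξ : Measurable ξ) (hξab : ∀ y, ξ y ∈ Set.Icc a b)
    (ybar₁ : Ω → ℝ)
    (hybar₁ : ybar₁ = fun ω => (n₁ : ℝ)⁻¹ * ∑ i : Fin n₁, (η x₁ θ₀ + ε (Sum.inl i) ω))
    (ybar₂ : ℕ → Ω → ℝ)
    (hybar₂ : ybar₂ = fun (n₂ : ℕ) (ω : Ω) =>
      (n₂ : ℝ)⁻¹ * ∑ j ∈ Finset.range n₂, (η (ξ (ybar₁ ω)) θ₀ + ε (Sum.inr j) ω))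
    -- the observed information, for second-stage sample size `n₂`
    (J : ℕ → Ω → ℝ)
    (hJ : J = fun (n₂ : ℕ) (ω : Ω) =>
      ((n₁ : ℝ) / σ ^ 2) * (η' x₁ θ₀) ^ 2
        - ((n₁ : ℝ) / σ ^ 2) * (ybar₁ ω - η x₁ θ₀) * η'' x₁ θ₀
        + ((n₂ : ℝ) / σ ^ 2) * (η' (ξ (ybar₁ ω)) θ₀) ^ 2
        - ((n₂ : ℝ) / σ ^ 2) * (ybar₂ n₂ ω - η (ξ (ybar₁ ω)) θ₀) * η'' (ξ (ybar₁ ω)) θ₀) :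
    TendstoInMeasure μ (fun (n₂ : ℕ) (ω : Ω) => ((n₁ + n₂ : ℕ) : ℝ)⁻¹ * J n₂ ω) atTop
      (fun ω => (η' (ξ (ybar₁ ω)) θ₀) ^ 2 / σ ^ 2) :=
  observed_information_convergence_in_probability_general (mΩ := mΩ) μ n₁ x₁ θ₀ σ η η' η'' hη hη'
    hη'' ε hεmeas hεindep hεlaw ξ hξ ybar₁ hybar₁ ybar₂ hybar₂ J hJ
end

section
/- (Lemma 4.1, part (3), at the true parameter.) In the two-stage model with η(·, θ₀) and η'(·, θ₀) bounded Borel functions on [a,b], define the stage-wise incremental observed information J^D_n(θ₀) = n₁² σ^{-4}(ȳ₁ − η(x₁, θ₀))² η'(x₁, θ₀)² + n₂² σ^{-4}(ȳ₂ − η(x₂, θ₀))² η'(x₂, θ₀)², where n = n₁ + n₂. Then, as n₂ → ∞ with n₁ held fixed, n^{-1} J^D_n(θ₀) converges in distribution to U^{-2}·W, where U^{-2} = η'(x₂, θ₀)²/σ² and W = Z² with Z a standard normal random variable independent of σ(ȳ₁) (so W has a chi-squared distribution with 1 degree of freedom, independent of U^{-2}). -/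
open MeasureTheory ProbabilityTheory Filter

open scoped NNReal Topology

/-!
At the true parameter the second-stage mean `η(x₂, θ₀)` cancels from `ȳ₂ - η(x₂, θ₀)`, so with
`Zₙ = (n σ²)^(-1/2) ∑_{j<n} ε_{2,j}` the averaged information is
`(n₁ + n)⁻¹ (A(ȳ₁) + n σ⁻² η'(x₂, θ₀)² Zₙ²)` with `x₂ = ξ(ȳ₁)`: a fixed function `gₙ` of the
pair `(ȳ₁, Zₙ)`. For `n ≥ 1`, `Zₙ` is standard normal and independent of `ȳ₁`, so `(ȳ₁, Zₙ)` has
the same law as `(ȳ₁, Z)`, and convergence in distribution reduces to dominated convergence of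
`f ∘ gₙ → f ∘ g` against that single law.
-/

section ConvInDistrib

variable {Ω : Type*} [MeasurableSpace Ω] {μ : Measure Ω}

lemma convInDistrib_comp_of_map_eq {E : Type*} [MeasurableSpace E] [IsFiniteMeasure μ]
    {V : ℕ → Ω → E} {W : Ω → E} {g : ℕ → E → ℝ} {glim : E → ℝ}
    (hV : ∀ n, Measurable (V n)) (hW : Measurable W) (hg : ∀ n, Measurable (g n))
    (hglim : Measurable glim) (hlaw : ∀ᶠ n in atTop, μ.map (V n) = μ.map W)
    (htendsto : ∀ x, Tendsto (fun n => g n x) atTop (𝓝 (glim x))) :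
    ConvInDistrib μ (fun n ω => g n (V n ω)) (fun ω => glim (W ω)) := by
  intro f
  have hf := f.continuous.measurable
  have hlim : Tendsto (fun n => ∫ x, f (g n x) ∂μ.map W) atTop
      (𝓝 (∫ x, f (glim x) ∂μ.map W)) :=
    tendsto_integral_of_dominated_convergence (fun _ => ‖f‖)
      (fun n => (hf.comp (hg n)).aestronglyMeasurable) (integrable_const _)
      (fun n => .of_forall fun x => f.norm_coe_le_norm _)
      (.of_forall fun x => (f.continuous.tendsto _).comp (htendsto x))
  have hlim_eq : ∫ x, f (glim x) ∂μ.map W = ∫ ω, f (glim (W ω)) ∂μ :=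
    integral_map hW.aemeasurable (hf.comp hglim).aestronglyMeasurable
  rw [hlim_eq] at hlim
  refine hlim.congr' (hlaw.mono fun n hn => ?_)
  rw [← hn]
  exact integral_map (hV n).aemeasurable (hf.comp (hg n)).aestronglyMeasurable

end ConvInDistrib

lemma map_prodMk_eq_of_indepFun {Ω α β : Type*} [MeasurableSpace Ω] [MeasurableSpace α]
    [MeasurableSpace β] {μ : Measure Ω} [IsFiniteMeasure μ] {Y : Ω → α} {Z Z' : Ω → β}
    (hY : AEMeasurable Y μ) (hZ : AEMeasurable Z μ) (hZ' : AEMeasurable Z' μ)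
    (h : IndepFun Y Z μ) (h' : IndepFun Y Z' μ) (hlaw : μ.map Z = μ.map Z') :
    μ.map (fun ω => (Y ω, Z ω)) = μ.map (fun ω => (Y ω, Z' ω)) := by
  rw [(indepFun_iff_map_prod_eq_prod_map_map hY hZ).mp h,
    (indepFun_iff_map_prod_eq_prod_map_map hY hZ').mp h', hlaw]

namespace ProbabilityTheory.iIndepFun

variable {Ω ι : Type*} [MeasurableSpace Ω] {μ : Measure Ω} {X : ι → Ω → ℝ}

lemma indepFun_finsetSum_finsetSum (hindep : iIndepFun X μ) (hX : ∀ i, Measurable (X i))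
    {S T : Finset ι} (hST : Disjoint S T) : IndepFun (∑ i ∈ S, X i) (∑ i ∈ T, X i) μ := by
  have hsum (U : Finset ι) : Measurable fun u : U → ℝ => ∑ i, u i :=
    Finset.measurable_sum _ fun i _ => measurable_pi_apply i
  convert (hindep.indepFun_finset S T hST hX).comp (hsum S) (hsum T) using 1 <;> ext ω <;>
    exact (Finset.sum_apply _ _ _).trans (Finset.sum_coe_sort _ _).symm

lemma map_finsetSum_eq_gaussianReal (hindep : iIndepFun X μ) (hX : ∀ i, Measurable (X i))
    {m : ι → ℝ} {v : ι → ℝ≥0} (hlaw : ∀ i, μ.map (X i) = gaussianReal (m i) (v i))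
    (s : Finset ι) : μ.map (∑ i ∈ s, X i) = gaussianReal (∑ i ∈ s, m i) (∑ i ∈ s, v i) := by
  classical
  have := hindep.isProbabilityMeasure
  induction s using Finset.induction_on with
  | empty =>
    show μ.map (fun _ => (0 : ℝ)) = _
    simp [gaussianReal_zero_var]
  | insert i s hi ih =>
    rw [Finset.sum_insert hi, Finset.sum_insert hi, Finset.sum_insert hi]
    exact gaussianReal_add_gaussianReal_of_indepFun
      (hindep.indepFun_finsetSum_of_notMem hX hi).symm (hlaw i) ih

lemma map_normalized_finsetSum_eq_gaussianReal (hindep : iIndepFun X μ)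
    (hX : ∀ i, Measurable (X i)) {v : ℝ≥0} (hv : v ≠ 0)
    (hlaw : ∀ i, μ.map (X i) = gaussianReal 0 v) {s : Finset ι} (hs : s.Nonempty) :
    μ.map (fun ω => (√(s.card * v))⁻¹ * ∑ i ∈ s, X i ω) = gaussianReal 0 1 := by
  have hcomp : (fun ω => (√(s.card * v))⁻¹ * ∑ i ∈ s, X i ω)
      = (fun x => (√(s.card * v))⁻¹ * x) ∘ fun ω => ∑ i ∈ s, X i ω := rfl
  rw [hcomp, ← Measure.map_map (measurable_const_mul _) (Finset.measurable_sum s fun i _ => hX i),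
    ← Finset.sum_fn, hindep.map_finsetSum_eq_gaussianReal hX hlaw, gaussianReal_map_const_mul]
  have hvar : (0 : ℝ) < s.card * v := by
    have := hs.card_pos
    positivity
  congr 1
  · simp
  · apply NNReal.coe_injective
    simp only [NNReal.coe_mul, NNReal.coe_mk, Finset.sum_const, nsmul_eq_mul,
      inv_pow, Real.sq_sqrt hvar.le, NNReal.coe_one]
    exact inv_mul_cancel₀ hvar.ne'

lemma indepFun_sum_inl_sum_inr {κ : Type*} [Fintype ι] {ε : ι ⊕ κ → Ω → ℝ}
    (hindep : iIndepFun ε μ) (hε : ∀ k, Measurable (ε k)) (s : Finset κ) :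
    IndepFun (fun ω => ∑ i, ε (.inl i) ω) (fun ω => ∑ j ∈ s, ε (.inr j) ω) μ := by
  have hdisj : Disjoint (Finset.univ.map .inl : Finset (ι ⊕ κ)) (s.map .inr) :=
    Finset.disjoint_left.2 (by simp)
  simpa [Finset.sum_map, Finset.sum_fn] using
    hindep.indepFun_finsetSum_finsetSum hε hdisj

end ProbabilityTheory.iIndepFun

lemma tendsto_inv_natCast_add_mul_add (k : ℕ) (a b : ℝ) :
    Tendsto (fun n : ℕ => ((k + n : ℕ) : ℝ)⁻¹ * (a + n * b)) atTop (𝓝 b) := by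
  have hinv : Tendsto (fun n : ℕ => ((k + n : ℕ) : ℝ)⁻¹) atTop (𝓝 0) :=
    tendsto_inv_atTop_zero.comp <| tendsto_natCast_atTop_atTop.comp <|
      tendsto_atTop_mono (Nat.le_add_left · k) tendsto_id
  have hlim := (hinv.mul_const (a - k * b)).const_add b
  rw [zero_mul, add_zero] at hlim
  refine hlim.congr' (eventually_ne_atTop 0 |>.mono fun n hn => ?_)
  have hkn : ((k + n : ℕ) : ℝ) ≠ 0 := by positivity
  field_simp
  push_cast
  ring

lemma sq_mul_sq_mean_sub_eq (n : ℕ) (c σ : ℝ) (hσ : σ ≠ 0) (e : ℕ → ℝ) :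
    (n : ℝ) ^ 2 * (σ ^ 4)⁻¹ * ((n : ℝ)⁻¹ * ∑ j ∈ Finset.range n, (c + e j) - c) ^ 2
      = n * ((σ ^ 2)⁻¹ * ((√(n * σ ^ 2))⁻¹ * ∑ j ∈ Finset.range n, e j) ^ 2) := by
  rcases eq_or_ne n 0 with rfl | hn
  · simp
  have hn' : (n : ℝ) ≠ 0 := by exact_mod_cast hn
  rw [Finset.sum_add_distrib, Finset.sum_const, Finset.card_range, nsmul_eq_mul, mul_pow,
    inv_pow, Real.sq_sqrt (by positivity)]
  field_simp
  ring

theorem stagewise_incremental_observed_information_convergence_general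
    {Ω : Type*} [mΩ : MeasurableSpace Ω] (μ : Measure Ω) [IsProbabilityMeasure μ]
    (n₁ : ℕ) (x₁ θ₀ σ : ℝ) (hσ : 0 < σ)
    (η η' : ℝ → ℝ → ℝ)
    (hη' : Measurable fun x => η' x θ₀)
    (ε : (Fin n₁ ⊕ ℕ) → Ω → ℝ) (hεmeas : ∀ k, Measurable (ε k))
    (hεindep : iIndepFun ε μ)
    (hεlaw : ∀ k, μ.map (ε k) = gaussianReal 0 ⟨σ ^ 2, sq_nonneg σ⟩)
    (ξ : ℝ → ℝ) (hξ : Measurable ξ)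
    (ybar₁ : Ω → ℝ)
    (hybar₁ : ybar₁ = fun ω => (n₁ : ℝ)⁻¹ * ∑ i : Fin n₁, (η x₁ θ₀ + ε (Sum.inl i) ω))
    (ybar₂ : ℕ → Ω → ℝ)
    (hybar₂ : ybar₂ = fun (n₂ : ℕ) (ω : Ω) =>
      (n₂ : ℝ)⁻¹ * ∑ j ∈ Finset.range n₂, (η (ξ (ybar₁ ω)) θ₀ + ε (Sum.inr j) ω))
    -- the stage-wise incremental observed information, for second-stage sample size `n₂`
    (J : ℕ → Ω → ℝ)
    (hJ : J = fun (n₂ : ℕ) (ω : Ω) =>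
      (n₁ : ℝ) ^ 2 * (σ ^ 4)⁻¹ * (ybar₁ ω - η x₁ θ₀) ^ 2 * (η' x₁ θ₀) ^ 2
        + (n₂ : ℝ) ^ 2 * (σ ^ 4)⁻¹ * (ybar₂ n₂ ω - η (ξ (ybar₁ ω)) θ₀) ^ 2 *
            (η' (ξ (ybar₁ ω)) θ₀) ^ 2)
    -- a standard normal random variable independent of `σ(ȳ₁)`
    (Z : Ω → ℝ) (hZmeas : Measurable Z)
    (hZindep : Indep (MeasurableSpace.comap Z inferInstance)
      (MeasurableSpace.comap ybar₁ inferInstance) μ)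
    (hZlaw : μ.map Z = gaussianReal 0 1) :
    ConvInDistrib μ (fun (n₂ : ℕ) (ω : Ω) => ((n₁ + n₂ : ℕ) : ℝ)⁻¹ * J n₂ ω)
      (fun ω => ((η' (ξ (ybar₁ ω)) θ₀) ^ 2 / σ ^ 2) * (Z ω) ^ 2) := by
  set v : ℝ≥0 := ⟨σ ^ 2, sq_nonneg σ⟩
  have hv : v ≠ 0 := NNReal.coe_ne_zero.1 (pow_pos hσ 2).ne'
  set Zn : ℕ → Ω → ℝ := fun n ω => (√(n * σ ^ 2))⁻¹ * ∑ j ∈ Finset.range n, ε (.inr j) ω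
  have hy : Measurable ybar₁ := by rw [hybar₁]; fun_prop
  have hZn n : Measurable (Zn n) := by fun_prop
  have hindep n : IndepFun ybar₁ (Zn n) μ := by
    rw [hybar₁]
    simp only [Finset.sum_add_distrib]
    exact (hεindep.indepFun_sum_inl_sum_inr hεmeas _).comp
      (φ := fun t => (n₁ : ℝ)⁻¹ * (∑ _ : Fin n₁, η x₁ θ₀ + t))
      (ψ := fun t => (√(n * σ ^ 2))⁻¹ * t) (by fun_prop) (by fun_prop)
  have hlaw n (hn : 1 ≤ n) : μ.map (Zn n) = μ.map Z := by
    have := (hεindep.precomp Sum.inr_injective).map_normalized_finsetSum_eq_gaussianReal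
      (fun j => hεmeas _) hv (fun j => hεlaw _) ⟨0, Finset.mem_range.2 hn⟩
    rwa [Finset.card_range, ← hZlaw] at this
  convert convInDistrib_comp_of_map_eq (μ := μ) (V := fun n ω => (ybar₁ ω, Zn n ω))
    (W := fun ω => (ybar₁ ω, Z ω))
    (g := fun n p => ((n₁ + n : ℕ) : ℝ)⁻¹ * ((n₁ : ℝ) ^ 2 * (σ ^ 4)⁻¹ * (p.1 - η x₁ θ₀) ^ 2 *
      (η' x₁ θ₀) ^ 2 + n * ((σ ^ 2)⁻¹ * p.2 ^ 2 * (η' (ξ p.1) θ₀) ^ 2)))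
    (glim := fun p => ((η' (ξ p.1) θ₀) ^ 2 / σ ^ 2) * p.2 ^ 2)
    (by fun_prop) (by fun_prop) (by fun_prop) (by fun_prop) ?_ ?_ using 1
  · funext n ω
    rw [hJ, hybar₂]
    dsimp only
    rw [sq_mul_sq_mean_sub_eq n _ σ hσ.ne']
    ring
  · exact eventually_atTop.2 ⟨1, fun n hn => map_prodMk_eq_of_indepFun hy.aemeasurable
      (hZn n).aemeasurable hZmeas.aemeasurable (hindep n) hZindep.symm (hlaw n hn)⟩
  · intro p
    convert tendsto_inv_natCast_add_mul_add n₁ _ _ using 2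
    ring

/-- Lemma 4.1 (3), at the true parameter: as `n₂ → ∞` with `n₁` fixed, the averaged
stage-wise incremental observed information `n⁻¹ J^D_n(θ₀)` converges in distribution to
`U⁻²·W`, where `U⁻² = η'(x₂, θ₀)²/σ²` and `W = Z²` with `Z` standard normal independent of
`σ(ȳ₁)` (so `W ∼ χ²(1)`, independent of `U⁻²`). -/
theorem stagewise_incremental_observed_information_convergence
    {Ω : Type*} [mΩ : MeasurableSpace Ω] (μ : Measure Ω) [IsProbabilityMeasure μ]
    (n₁ : ℕ) (hn₁ : 1 ≤ n₁) (a b x₁ θ₀ σ : ℝ) (hab : a ≤ b) (hσ : 0 < σ)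
    (η η' : ℝ → ℝ → ℝ)
    (hderiv : ∀ x θ, HasDerivAt (fun t => η x t) (η' x θ) θ)
    (hη : Measurable fun x => η x θ₀) (hηbdd : ∃ C : ℝ, ∀ x ∈ Set.Icc a b, |η x θ₀| ≤ C)
    (hη' : Measurable fun x => η' x θ₀) (hη'bdd : ∃ C : ℝ, ∀ x ∈ Set.Icc a b, |η' x θ₀| ≤ C)
    (ε : (Fin n₁ ⊕ ℕ) → Ω → ℝ) (hεmeas : ∀ k, Measurable (ε k))
    (hεindep : iIndepFun ε μ)
    (hεlaw : ∀ k, μ.map (ε k) = gaussianReal 0 ⟨σ ^ 2, sq_nonneg σ⟩)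
    (ξ : ℝ → ℝ) (hξ : Measurable ξ) (hξab : ∀ y, ξ y ∈ Set.Icc a b)
    (ybar₁ : Ω → ℝ)
    (hybar₁ : ybar₁ = fun ω => (n₁ : ℝ)⁻¹ * ∑ i : Fin n₁, (η x₁ θ₀ + ε (Sum.inl i) ω))
    (ybar₂ : ℕ → Ω → ℝ)
    (hybar₂ : ybar₂ = fun (n₂ : ℕ) (ω : Ω) =>
      (n₂ : ℝ)⁻¹ * ∑ j ∈ Finset.range n₂, (η (ξ (ybar₁ ω)) θ₀ + ε (Sum.inr j) ω))
    -- the stage-wise incremental observed information, for second-stage sample size `n₂`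
    (J : ℕ → Ω → ℝ)
    (hJ : J = fun (n₂ : ℕ) (ω : Ω) =>
      (n₁ : ℝ) ^ 2 * (σ ^ 4)⁻¹ * (ybar₁ ω - η x₁ θ₀) ^ 2 * (η' x₁ θ₀) ^ 2
        + (n₂ : ℝ) ^ 2 * (σ ^ 4)⁻¹ * (ybar₂ n₂ ω - η (ξ (ybar₁ ω)) θ₀) ^ 2 *
            (η' (ξ (ybar₁ ω)) θ₀) ^ 2)
    -- a standard normal random variable independent of `σ(ȳ₁)`
    (Z : Ω → ℝ) (hZmeas : Measurable Z)
    (hZindep : Indep (MeasurableSpace.comap Z inferInstance)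
      (MeasurableSpace.comap ybar₁ inferInstance) μ)
    (hZlaw : μ.map Z = gaussianReal 0 1) :
    ConvInDistrib μ (fun (n₂ : ℕ) (ω : Ω) => ((n₁ + n₂ : ℕ) : ℝ)⁻¹ * J n₂ ω)
      (fun ω => ((η' (ξ (ybar₁ ω)) θ₀) ^ 2 / σ ^ 2) * (Z ω) ^ 2) :=
  stagewise_incremental_observed_information_convergence_general (mΩ := mΩ) μ n₁ x₁ θ₀ σ hσ η η' hη'
    ε hεmeas hεindep hεlaw ξ hξ ybar₁ hybar₁ ybar₂ hybar₂ J hJ Z hZmeas hZindep hZlaw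
end

section
/- In the two-stage model with η(·, θ₀), η'(·, θ₀), η''(·, θ₀) bounded Borel functions on [a,b], the observed information j_n(θ₀) = (n₁/σ²)η'(x₁, θ₀)² − (n₁/σ²)(ȳ₁ − η(x₁, θ₀))η''(x₁, θ₀) + (n₂/σ²)η'(x₂, θ₀)² − (n₂/σ²)(ȳ₂ − η(x₂, θ₀))η''(x₂, θ₀) satisfies E[j_n(θ₀)] = (n₁/σ²) η'(x₁, θ₀)² + (n₂/σ²) E[η'(x₂, θ₀)²]; that is, the Fisher information of the two-stage adaptive design equals the first-stage information plus the expected second-stage information, the cross terms involving η'' having zero expectation. -/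
/-!
Both residuals are noise averages: `n₁ (ȳ₁ - η(x₁, θ₀)) = ∑ᵢ ε₁ᵢ` and
`n₂ (ȳ₂ - η(x₂, θ₀)) = ∑ⱼ ε₂ⱼ`. The first cross term is therefore a constant multiple of a
centred variable. In the second, the dose `x₂ = ξ(ȳ₁)` is a function of the first-stage noise
only, so `η''(x₂, θ₀)` is independent of each `ε₂ⱼ` and
`E[ε₂ⱼ η''(x₂, θ₀)] = E[ε₂ⱼ] E[η''(x₂, θ₀)] = 0`.
Boundedness of `η'` and `η''` on `[a, b] ∋ x₂` makes every term integrable.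
-/

open MeasureTheory ProbabilityTheory Filter
open Finset
open scoped NNReal

section Gaussian

variable {Ω : Type*} [MeasurableSpace Ω] {μ : Measure Ω} {X : Ω → ℝ} {m : ℝ} {v : ℝ≥0}

lemma integrable_of_map_eq_gaussianReal (hX : AEMeasurable X μ)
    (hlaw : μ.map X = gaussianReal m v) : Integrable X μ := by
  have h : Integrable id (μ.map X) := hlaw ▸ (memLp_id_gaussianReal 1).integrable le_rfl
  exact h.comp_aemeasurable hX

lemma integral_eq_of_map_eq_gaussianReal (hX : AEMeasurable X μ)
    (hlaw : μ.map X = gaussianReal m v) : ∫ ω, X ω ∂μ = m := by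
  rw [← integral_id_gaussianReal (μ := m) (v := v), ← hlaw]
  exact (integral_map (f := fun x => x) hX aestronglyMeasurable_id).symm

end Gaussian

lemma Finset.card_mul_inv_card_mul_sum_const_add_sub {ι : Type*} (s : Finset ι) (c : ℝ)
    (f : ι → ℝ) : (#s : ℝ) * ((#s : ℝ)⁻¹ * ∑ i ∈ s, (c + f i) - c) = ∑ i ∈ s, f i := by
  rcases s.eq_empty_or_nonempty with rfl | hs
  · simp
  · have : (#s : ℝ) ≠ 0 := by exact_mod_cast hs.card_ne_zero
    rw [sum_add_distrib, sum_const, nsmul_eq_mul]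
    field_simp
    ring

section Noise

variable {Ω : Type*} [MeasurableSpace Ω] {μ : Measure Ω}

lemma integrable_comp_of_abs_le [IsFiniteMeasure μ] {s : Set ℝ} {f : ℝ → ℝ} (hf : Measurable f)
    (hbdd : ∃ C, ∀ x ∈ s, |f x| ≤ C) {X : Ω → ℝ} (hX : Measurable X) (hXs : ∀ ω, X ω ∈ s) :
    Integrable (fun ω => f (X ω)) μ := by
  obtain ⟨C, hC⟩ := hbdd
  exact .of_bound (hf.comp hX).aestronglyMeasurable C (.of_forall fun ω => hC _ (hXs ω))

lemma ProbabilityTheory.iIndepFun.indepFun_inr_comp_inl {ι κ : Type*} [Fintype ι]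
    {ε : ι ⊕ κ → Ω → ℝ} (h : iIndepFun ε μ) (hmeas : ∀ k, Measurable (ε k))
    {φ : (ι → ℝ) → ℝ} (hφ : Measurable φ) (j : κ) :
    IndepFun (ε (Sum.inr j)) (fun ω => φ (fun i => ε (Sum.inl i) ω)) μ := by
  have hST : Disjoint ({Sum.inr j} : Finset (ι ⊕ κ)) (univ.map .inl) := by simp
  have hpick : Measurable fun w : ({Sum.inr j} : Finset (ι ⊕ κ)) → ℝ => w ⟨Sum.inr j, by simp⟩ :=
    measurable_pi_apply _
  have hφ' : Measurable fun w : (univ.map .inl : Finset (ι ⊕ κ)) → ℝ =>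
      φ fun i => w ⟨Sum.inl i, by simp⟩ :=
    hφ.comp (measurable_pi_lambda _ fun _ => measurable_pi_apply _)
  exact (h.indepFun_finset _ _ hST hmeas).comp hpick hφ'

variable {ι : Type*} (s : Finset ι) {e : ι → Ω → ℝ} {g : Ω → ℝ}

lemma integrable_sum_mul_and_integral_eq_zero_of_indepFun (he : ∀ i ∈ s, Integrable (e i) μ)
    (he₀ : ∀ i ∈ s, ∫ ω, e i ω ∂μ = 0) (hg : Integrable g μ)
    (hind : ∀ i ∈ s, IndepFun (e i) g μ) :
    Integrable (fun ω => (∑ i ∈ s, e i ω) * g ω) μ ∧ ∫ ω, (∑ i ∈ s, e i ω) * g ω ∂μ = 0 := by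
  have hint : ∀ i ∈ s, Integrable (fun ω => e i ω * g ω) μ :=
    fun i hi => (hind i hi).integrable_mul (he i hi) hg
  simp only [sum_mul]
  refine ⟨integrable_finsetSum _ hint, ?_⟩
  rw [integral_finsetSum _ hint]
  refine sum_eq_zero fun i hi => ?_
  rw [(hind i hi).integral_fun_mul_eq_mul_integral (he i hi).1 hg.1, he₀ i hi, zero_mul]

end Noise

theorem expected_observed_information_eq_fisher_information_general
    {Ω : Type*} [mΩ : MeasurableSpace Ω] (μ : Measure Ω) [IsProbabilityMeasure μ]
    (n₁ : ℕ) (a b x₁ θ₀ σ : ℝ)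
    (η η' η'' : ℝ → ℝ → ℝ)
    (hη' : Measurable fun x => η' x θ₀) (hη'bdd : ∃ C : ℝ, ∀ x ∈ Set.Icc a b, |η' x θ₀| ≤ C)
    (hη'' : Measurable fun x => η'' x θ₀)
    (hη''bdd : ∃ C : ℝ, ∀ x ∈ Set.Icc a b, |η'' x θ₀| ≤ C)
    (ε : (Fin n₁ ⊕ ℕ) → Ω → ℝ) (hεmeas : ∀ k, Measurable (ε k))
    (hεindep : iIndepFun ε μ)
    (hεlaw : ∀ k, μ.map (ε k) = gaussianReal 0 ⟨σ ^ 2, sq_nonneg σ⟩)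
    (ξ : ℝ → ℝ) (hξ : Measurable ξ) (hξab : ∀ y, ξ y ∈ Set.Icc a b)
    (ybar₁ : Ω → ℝ)
    (hybar₁ : ybar₁ = fun ω => (n₁ : ℝ)⁻¹ * ∑ i : Fin n₁, (η x₁ θ₀ + ε (Sum.inl i) ω))
    (n₂ : ℕ)
    (ybar₂ : Ω → ℝ)
    (hybar₂ : ybar₂ = fun ω =>
      (n₂ : ℝ)⁻¹ * ∑ j ∈ Finset.range n₂, (η (ξ (ybar₁ ω)) θ₀ + ε (Sum.inr j) ω))
    -- the observed information
    (J : Ω → ℝ)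
    (hJ : J = fun ω =>
      ((n₁ : ℝ) / σ ^ 2) * (η' x₁ θ₀) ^ 2
        - ((n₁ : ℝ) / σ ^ 2) * (ybar₁ ω - η x₁ θ₀) * η'' x₁ θ₀
        + ((n₂ : ℝ) / σ ^ 2) * (η' (ξ (ybar₁ ω)) θ₀) ^ 2
        - ((n₂ : ℝ) / σ ^ 2) * (ybar₂ ω - η (ξ (ybar₁ ω)) θ₀) * η'' (ξ (ybar₁ ω)) θ₀) :
    ∫ ω, J ω ∂μ =
      ((n₁ : ℝ) / σ ^ 2) * (η' x₁ θ₀) ^ 2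
        + ((n₂ : ℝ) / σ ^ 2) * ∫ ω, (η' (ξ (ybar₁ ω)) θ₀) ^ 2 ∂μ := by
  have hεint k : Integrable (ε k) μ :=
    integrable_of_map_eq_gaussianReal (hεmeas k).aemeasurable (hεlaw k)
  have hε₀ k : ∫ ω, ε k ω ∂μ = 0 :=
    integral_eq_of_map_eq_gaussianReal (hεmeas k).aemeasurable (hεlaw k)
  have hx₂ : Measurable fun ω => ξ (ybar₁ ω) := hξ.comp (by rw [hybar₁]; fun_prop)
  have hsq : Integrable (fun ω => η' (ξ (ybar₁ ω)) θ₀ ^ 2) μ := by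
    obtain ⟨C, hC⟩ := hη'bdd
    refine integrable_comp_of_abs_le (hη'.pow_const 2) ⟨C ^ 2, fun x hx => ?_⟩ hx₂ fun _ => hξab _
    simpa only [abs_pow] using pow_le_pow_left₀ (abs_nonneg _) (hC x hx) 2
  have hg : Integrable (fun ω => η'' (ξ (ybar₁ ω)) θ₀) μ :=
    integrable_comp_of_abs_le hη'' hη''bdd hx₂ fun _ => hξab _
  have hind j : IndepFun (ε (Sum.inr j)) (fun ω => η'' (ξ (ybar₁ ω)) θ₀) μ := by
    subst hybar₁
    exact hεindep.indepFun_inr_comp_inl hεmeas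
      (φ := fun v => η'' (ξ ((n₁ : ℝ)⁻¹ * ∑ i, (η x₁ θ₀ + v i))) θ₀) (by fun_prop) j
  have hJ' : J = fun ω => (n₁ / σ ^ 2) * η' x₁ θ₀ ^ 2 + (n₂ / σ ^ 2) * η' (ξ (ybar₁ ω)) θ₀ ^ 2
      - (σ ^ 2)⁻¹ * ((∑ i : Fin n₁, ε (Sum.inl i) ω) * η'' x₁ θ₀
        + (∑ j ∈ range n₂, ε (Sum.inr j) ω) * η'' (ξ (ybar₁ ω)) θ₀) := by
    funext ω
    rw [← card_mul_inv_card_mul_sum_const_add_sub univ (η x₁ θ₀),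
      ← card_mul_inv_card_mul_sum_const_add_sub (range n₂) (η (ξ (ybar₁ ω)) θ₀), hJ, hybar₂, hybar₁]
    simp only [card_univ, Fintype.card_fin, card_range]
    ring
  obtain ⟨hint₁, hzero₁⟩ := integrable_sum_mul_and_integral_eq_zero_of_indepFun
    (e := fun i => ε (Sum.inl i)) univ (fun i _ => hεint _) (fun i _ => hε₀ _)
    (integrable_const (η'' x₁ θ₀)) fun i _ => indepFun_const_right _ _
  obtain ⟨hint₂, hzero₂⟩ := integrable_sum_mul_and_integral_eq_zero_of_indepFun
    (e := fun j => ε (Sum.inr j)) (range n₂) (fun j _ => hεint _) (fun j _ => hε₀ _) hg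
    fun j _ => hind j
  simp only [hJ']
  rw [integral_sub, integral_add (integrable_const _) (hsq.const_mul _),
    integral_const_mul (σ ^ 2)⁻¹, integral_add hint₁ hint₂, hzero₁, hzero₂]
  · simp [integral_const_mul]
  · exact (integrable_const _).add (hsq.const_mul _)
  · exact (hint₁.add hint₂).const_mul _

/-- The Fisher information of the two-stage adaptive design: the expectation of the observed
information equals the first-stage information plus the expected second-stage information,
the cross terms involving `η''` having zero expectation:
`E[j_n(θ₀)] = (n₁/σ²)·η'(x₁, θ₀)² + (n₂/σ²)·E[η'(x₂, θ₀)²]`. -/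
theorem expected_observed_information_eq_fisher_information
    {Ω : Type*} [mΩ : MeasurableSpace Ω] (μ : Measure Ω) [IsProbabilityMeasure μ]
    (n₁ : ℕ) (hn₁ : 1 ≤ n₁) (a b x₁ θ₀ σ : ℝ) (hab : a ≤ b) (hσ : 0 < σ)
    (η η' η'' : ℝ → ℝ → ℝ)
    (hderiv : ∀ x θ, HasDerivAt (fun t => η x t) (η' x θ) θ)
    (hderiv2 : ∀ x θ, HasDerivAt (fun t => η' x t) (η'' x θ) θ)
    (hη : Measurable fun x => η x θ₀) (hηbdd : ∃ C : ℝ, ∀ x ∈ Set.Icc a b, |η x θ₀| ≤ C)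
    (hη' : Measurable fun x => η' x θ₀) (hη'bdd : ∃ C : ℝ, ∀ x ∈ Set.Icc a b, |η' x θ₀| ≤ C)
    (hη'' : Measurable fun x => η'' x θ₀)
    (hη''bdd : ∃ C : ℝ, ∀ x ∈ Set.Icc a b, |η'' x θ₀| ≤ C)
    (ε : (Fin n₁ ⊕ ℕ) → Ω → ℝ) (hεmeas : ∀ k, Measurable (ε k))
    (hεindep : iIndepFun ε μ)
    (hεlaw : ∀ k, μ.map (ε k) = gaussianReal 0 ⟨σ ^ 2, sq_nonneg σ⟩)
    (ξ : ℝ → ℝ) (hξ : Measurable ξ) (hξab : ∀ y, ξ y ∈ Set.Icc a b)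
    (ybar₁ : Ω → ℝ)
    (hybar₁ : ybar₁ = fun ω => (n₁ : ℝ)⁻¹ * ∑ i : Fin n₁, (η x₁ θ₀ + ε (Sum.inl i) ω))
    (n₂ : ℕ) (hn₂ : 1 ≤ n₂)
    (ybar₂ : Ω → ℝ)
    (hybar₂ : ybar₂ = fun ω =>
      (n₂ : ℝ)⁻¹ * ∑ j ∈ Finset.range n₂, (η (ξ (ybar₁ ω)) θ₀ + ε (Sum.inr j) ω))
    -- the observed information
    (J : Ω → ℝ)
    (hJ : J = fun ω =>
      ((n₁ : ℝ) / σ ^ 2) * (η' x₁ θ₀) ^ 2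
        - ((n₁ : ℝ) / σ ^ 2) * (ybar₁ ω - η x₁ θ₀) * η'' x₁ θ₀
        + ((n₂ : ℝ) / σ ^ 2) * (η' (ξ (ybar₁ ω)) θ₀) ^ 2
        - ((n₂ : ℝ) / σ ^ 2) * (ybar₂ ω - η (ξ (ybar₁ ω)) θ₀) * η'' (ξ (ybar₁ ω)) θ₀) :
    ∫ ω, J ω ∂μ =
      ((n₁ : ℝ) / σ ^ 2) * (η' x₁ θ₀) ^ 2
        + ((n₂ : ℝ) / σ ^ 2) * ∫ ω, (η' (ξ (ybar₁ ω)) θ₀) ^ 2 ∂μ :=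
  expected_observed_information_eq_fisher_information_general (mΩ := mΩ) μ n₁ a b x₁ θ₀ σ η η' η''
    hη' hη'bdd hη'' hη''bdd ε hεmeas hεindep hεlaw ξ hξ hξab ybar₁ hybar₁ n₂ ybar₂ hybar₂ J hJ
end
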